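/- With the data (k, 𝔛, V, d) and the auxiliary Lie algebra g̃ as in the context, assume 𝔛 has enough modules. Then g̃ decomposes as a direct sum of k-vector subspaces g̃ = n₋ ⊕ ι₀(𝔛) ⊕ n₊, where n₊ and n₋ are the Lie subalgebras of g̃ generated by the images of V and V*. Moreover, with respect to the ℤ-grading of g̃, one has n₋ = ⊕_{n<0} g̃_n, ι₀(𝔛) = g̃_0, and n₊ = ⊕_{n>0} g̃_n. -/

import Mathlib

/-! ## Semidirect product of Lie algebras along an action by derivations -/

variable (R : Type*) [CommRing R] (L : Type*) [LieRing L] [LieAlgebra R L]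
  (M : Type*) [LieRing M] [LieAlgebra R M]

/-- Type synonym for the semidirect product of Lie algebras. -/
@[nolint unusedArguments]
def LieSemidirectProduct (_δ : M →ₗ⁅R⁆ LieDerivation R L L) : Type _ := L × M

namespace LieSemidirectProduct

variable {R L M}
variable (δ : M →ₗ⁅R⁆ LieDerivation R L L)

instance : AddCommGroup (LieSemidirectProduct R L M δ) :=
  inferInstanceAs (AddCommGroup (L × M))

instance : Module R (LieSemidirectProduct R L M δ) :=
  inferInstanceAs (Module R (L × M))

/-- Build an element of the semidirect product. -/
def mk (t : L) (x : M) : LieSemidirectProduct R L M δ := (t, x)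

@[simp] lemma mk_fst (t : L) (x : M) : (mk δ t x).1 = t := rfl
@[simp] lemma mk_snd (t : L) (x : M) : (mk δ t x).2 = x := rfl

instance : LieRing (LieSemidirectProduct R L M δ) where
  bracket p q := (⁅p.1, q.1⁆ + δ p.2 q.1 - δ q.2 p.1, ⁅p.2, q.2⁆)
  add_lie p q r := by
    show Prod.mk _ _ = Prod.mk _ _ + Prod.mk _ _
    show _ = Prod.mk (_ + _) (_ + _)
    refine congrArg₂ Prod.mk ?_ (add_lie _ _ _)
    show ⁅p.1 + q.1, r.1⁆ + δ (p.2 + q.2) r.1 - δ r.2 (p.1 + q.1) = _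
    simp only [add_lie, LieDerivation.add_apply, map_add]
    abel
  lie_add p q r := by
    show Prod.mk _ _ = Prod.mk _ _ + Prod.mk _ _
    show _ = Prod.mk (_ + _) (_ + _)
    refine congrArg₂ Prod.mk ?_ (lie_add _ _ _)
    show ⁅p.1, q.1 + r.1⁆ + δ p.2 (q.1 + r.1) - δ (q.2 + r.2) p.1 = _
    simp only [lie_add, LieDerivation.add_apply, map_add]
    abel
  lie_self p := by
    show Prod.mk _ _ = (0 : L × M)
    rw [Prod.mk_eq_zero]
    constructor
    · show ⁅p.1, p.1⁆ + δ p.2 p.1 - δ p.2 p.1 = 0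
      simp
    · exact lie_self _
  leibniz_lie p q r := by
    show Prod.mk _ _ = Prod.mk _ _ + Prod.mk _ _
    show _ = Prod.mk (_ + _) (_ + _)
    refine congrArg₂ Prod.mk ?_ (leibniz_lie _ _ _)
    show ⁅p.1, ⁅q.1, r.1⁆ + δ q.2 r.1 - δ r.2 q.1⁆ + δ p.2 (⁅q.1, r.1⁆ + δ q.2 r.1 - δ r.2 q.1)
        - δ ⁅q.2, r.2⁆ p.1
      = (⁅⁅p.1, q.1⁆ + δ p.2 q.1 - δ q.2 p.1, r.1⁆ + δ ⁅p.2, q.2⁆ r.1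
          - δ r.2 (⁅p.1, q.1⁆ + δ p.2 q.1 - δ q.2 p.1))
        + (⁅q.1, ⁅p.1, r.1⁆ + δ p.2 r.1 - δ r.2 p.1⁆ + δ q.2 (⁅p.1, r.1⁆ + δ p.2 r.1 - δ r.2 p.1)
          - δ ⁅p.2, r.2⁆ q.1)
    have hskew : ⁅δ r.2 p.1, q.1⁆ = -⁅q.1, δ r.2 p.1⁆ := (lie_skew _ _).symm
    simp only [lie_add, add_lie, lie_sub, sub_lie, map_add, map_sub,
      LieHom.map_lie, LieDerivation.lie_apply, LieDerivation.apply_lie_eq_add, hskew,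
      LieDerivation.add_apply, LieDerivation.sub_apply]
    rw [leibniz_lie p.1 q.1 r.1]
    abel

instance : LieAlgebra R (LieSemidirectProduct R L M δ) where
  lie_smul c p q := by
    show Prod.mk _ _ = c • Prod.mk _ _
    show _ = Prod.mk (c • _) (c • _)
    refine congrArg₂ Prod.mk ?_ (lie_smul _ _ _)
    show ⁅p.1, c • q.1⁆ + δ p.2 (c • q.1) - δ (c • q.2) p.1 = _
    simp only [lie_smul, LieDerivation.smul_apply, smul_add, smul_sub, map_smul]

@[simp] lemma bracket_def (p q : LieSemidirectProduct R L M δ) :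
    ⁅p, q⁆ = (mk δ (⁅p.1, q.1⁆ + δ p.2 q.1 - δ q.2 p.1) ⁅p.2, q.2⁆) := rfl

/-- The canonical inclusion of `L` into the semidirect product. -/
def inl : L →ₗ⁅R⁆ LieSemidirectProduct R L M δ where
  toFun t := mk δ t 0
  map_add' t s := by
    show Prod.mk _ _ = Prod.mk _ _ + Prod.mk _ _
    show _ = Prod.mk (_ + _) (_ + _)
    rw [add_zero]
  map_smul' c t := by
    show Prod.mk _ _ = c • Prod.mk _ _
    show _ = Prod.mk (c • _) (c • _)
    rw [smul_zero]
  map_lie' {t s} := by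
    show mk δ ⁅t, s⁆ 0 = mk δ (⁅t, s⁆ + δ 0 s - δ 0 t) ⁅(0 : M), (0 : M)⁆
    simp [mk] <;> rfl

/-- The canonical inclusion of `M` into the semidirect product. -/
def inr : M →ₗ⁅R⁆ LieSemidirectProduct R L M δ where
  toFun x := mk δ 0 x
  map_add' x y := by
    show Prod.mk _ _ = Prod.mk _ _ + Prod.mk _ _
    show _ = Prod.mk (_ + _) (_ + _)
    rw [add_zero]
  map_smul' c x := by
    show Prod.mk _ _ = c • Prod.mk _ _
    show _ = Prod.mk (c • _) (c • _)
    rw [smul_zero]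
  map_lie' {x y} := by
    show mk δ 0 ⁅x, y⁆ = mk δ (⁅(0 : L), (0 : L)⁆ + δ x 0 - δ y 0) ⁅x, y⁆
    simp [mk] <;> rfl

end LieSemidirectProduct

/-! ## The contragredient construction -/

open TensorProduct

attribute [local instance 100] LieRing.ofAssociativeRing

namespace Contragredient

variable (k : Type*) [Field k]
variable {X : Type*} [LieRing X] [LieAlgebra k X]
variable (V : Type*) [AddCommGroup V] [Module k V]

/-- The action of `X` on the dual of `V` induced by a representation `φ`:
`(x · f) v = - f (x · v)`. -/
def dualAct (φ : X →ₗ⁅k⁆ Module.End k V) (x : X) (f : Module.Dual k V) :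
    Module.Dual k V :=
  -(f ∘ₗ φ x)

/-- The free Lie algebra on `V ⊕ V*`: the Lie subalgebra of the tensor algebra
(with commutator bracket) generated by `V ⊕ V*`. -/
def F : LieSubalgebra k (TensorAlgebra k (V × Module.Dual k V)) :=
  LieSubalgebra.lieSpan k _ (Set.range (TensorAlgebra.ι k))

/-- The canonical inclusion of `V ⊕ V*` into the free Lie algebra on it. -/
def ιF (w : V × Module.Dual k V) : F k V :=
  ⟨TensorAlgebra.ι k w, LieSubalgebra.subset_lieSpan ⟨w, rfl⟩⟩

variable {V}
variable (δ : X →ₗ⁅k⁆ LieDerivation k (F k V) (F k V))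
variable (d : V ⊗[k] Module.Dual k V →ₗ[k] X)

/-- The semidirect product `FLie(V ⊕ V*) ⋊ X`. -/
abbrev SD := LieSemidirectProduct k (F k V) X δ

/-- The defining relations of the auxiliary contragredient Lie algebra. -/
def rel : Set (SD k δ) :=
  { p | ∃ (v : V) (f : Module.Dual k V),
      p = LieSemidirectProduct.mk δ ⁅ιF k V (v, 0), ιF k V (0, f)⁆ (-(d (v ⊗ₜ[k] f))) }

/-- The ideal of relations. -/
def I0 : LieIdeal k (SD k δ) := LieSubmodule.lieSpan k _ (rel k δ d)

/-- The auxiliary contragredient Lie algebra `g̃(ρ, d)`. -/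
abbrev gt := SD k δ ⧸ I0 k δ d

/-- The quotient map onto the auxiliary contragredient Lie algebra. -/
def π : SD k δ →ₗ⁅k⁆ gt k δ d :=
  { (I0 k δ d).toSubmodule.mkQ with
    map_lie' := fun {_ _} => rfl }

/-- The canonical map from `X` to `g̃`. -/
def ι₀ : X →ₗ⁅k⁆ gt k δ d := (π k δ d).comp (LieSemidirectProduct.inr δ)

/-- The canonical map from `V` to `g̃`. -/
def gtV (v : V) : gt k δ d := π k δ d (LieSemidirectProduct.mk δ (ιF k V (v, 0)) 0)

/-- The canonical map from `V*` to `g̃`. -/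
def gtD (f : Module.Dual k V) : gt k δ d :=
  π k δ d (LieSemidirectProduct.mk δ (ιF k V (0, f)) 0)

/-- The positive subalgebra `n₊` of `g̃`: the Lie subalgebra generated by the image of `V`. -/
def nPlus : LieSubalgebra k (gt k δ d) :=
  LieSubalgebra.lieSpan k _ (Set.range (gtV k δ d))

/-- The negative subalgebra `n₋` of `g̃`: the Lie subalgebra generated by the image of `V*`. -/
def nMinus : LieSubalgebra k (gt k δ d) :=
  LieSubalgebra.lieSpan k _ (Set.range (gtD k δ d))

universe w

/-- `X` has enough modules: for every nonzero `x : X` there is a representation of `X`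
on which `x` acts nontrivially. -/
def HasEnoughModules (k : Type*) [Field k] (X : Type*) [LieRing X] [LieAlgebra k X] : Prop :=
  ∀ x : X, x ≠ 0 →
    ∃ (W : Type w) (_ : AddCommGroup W) (_ : Module k W)
      (ρW : X →ₗ⁅k⁆ Module.End k W), ρW x ≠ 0

end Contragredient

/-!
`g̃` is generated as a Lie algebra by the images of `V`, `V*` and `𝔛`, and the subspace
`n₋ + ι₀(𝔛) + n₊` is stable under bracketing with each generator. The only cases that need an
argument are `⁅V, n₋⁆ ⊆ n₋ + ι₀(𝔛)` and `⁅V*, n₊⁆ ⊆ n₊ + ι₀(𝔛)`; both follow by induction on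
`n∓` from the relation `⁅v, f⁆ = ι₀ (d (v ⊗ f))` and the stability of `n∓` under `ι₀(𝔛)`.
Hence `g̃ = n₋ + ι₀(𝔛) + n₊`. As `n₋`, `ι₀(𝔛)` and `n₊` lie in the negative, zero and positive
parts of the grading, which are independent, the three inclusions are equalities and the sum
is direct.
-/

lemma LieSemidirectProduct.lie_inr_inl {R L M : Type*} [CommRing R] [LieRing L] [LieAlgebra R L]
    [LieRing M] [LieAlgebra R M] (δ : M →ₗ⁅R⁆ LieDerivation R L L) (x : M) (t : L) :
    ⁅inr δ x, inl δ t⁆ = inl δ (δ x t) :=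
  Prod.ext (by simp [inl, inr]) (lie_zero x)

section GradedLie

variable {R L ι : Type*} [CommRing R] [LieRing L] [LieAlgebra R L] [Add ι]

lemma lie_mem_biSup_of_add_mem {G : ι → Submodule R L}
    (hG : ∀ i j, ∀ a ∈ G i, ∀ b ∈ G j, ⁅a, b⁆ ∈ G (i + j))
    {s : Set ι} (hs : ∀ i ∈ s, ∀ j ∈ s, i + j ∈ s) {a b : L}
    (ha : a ∈ ⨆ i ∈ s, G i) (hb : b ∈ ⨆ i ∈ s, G i) : ⁅a, b⁆ ∈ ⨆ i ∈ s, G i := by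
  have hmap : Submodule.map₂ (LieAlgebra.ad R L).toLinearMap (⨆ i ∈ s, G i) (⨆ i ∈ s, G i)
      ≤ ⨆ i ∈ s, G i := by
    simp only [Submodule.map₂_iSup_left, Submodule.map₂_iSup_right]
    refine iSup₂_le fun j hj => iSup₂_le fun i hi => Submodule.map₂_le.2 fun a ha b hb => ?_
    exact (le_biSup G (hs i hi j hj)) (hG i j a ha b hb)
  exact hmap (Submodule.apply_mem_map₂ _ ha hb)

lemma lieSpan_le_biSup_of_add_mem {G : ι → Submodule R L}
    (hG : ∀ i j, ∀ a ∈ G i, ∀ b ∈ G j, ⁅a, b⁆ ∈ G (i + j))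
    {s : Set ι} (hs : ∀ i ∈ s, ∀ j ∈ s, i + j ∈ s) {T : Set L} {i : ι} (hi : i ∈ s)
    (hT : T ⊆ G i) : (LieSubalgebra.lieSpan R L T).toSubmodule ≤ ⨆ i ∈ s, G i := by
  let K : LieSubalgebra R L :=
    { (⨆ i ∈ s, G i : Submodule R L) with
      lie_mem' := lie_mem_biSup_of_add_mem hG hs }
  exact LieSubalgebra.lieSpan_le (K := K) |>.2 (hT.trans (le_biSup G hi))

end GradedLie

section LieSpan

variable {R L : Type*} [CommRing R] [LieRing L] [LieAlgebra R L]

lemma LieSubalgebra.lie_mem_of_mem_lieSpan {T : Set L} {S : Submodule R L}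
    (hTS : (lieSpan R L T).toSubmodule ≤ S)
    (hST : ∀ s ∈ S, ∀ m ∈ lieSpan R L T, ⁅s, m⁆ ∈ lieSpan R L T)
    {y : L} (hy : ∀ t ∈ T, ⁅y, t⁆ ∈ S) {m : L} (hm : m ∈ lieSpan R L T) :
    ⁅y, m⁆ ∈ S := by
  induction hm using lieSpan_induction with
  | mem t ht => exact hy t ht
  | zero => simp
  | add a b _ _ ha hb => simpa only [lie_add] using add_mem ha hb
  | smul c a _ ha => simpa only [lie_smul] using S.smul_mem c ha
  | lie a b ha hb ha' hb' =>
    rw [leibniz_lie, ← lie_skew a ⁅y, b⁆]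
    exact add_mem (hTS (hST _ ha' b hb)) (neg_mem (hTS (hST _ hb' a ha)))

lemma Submodule.eq_top_of_lie_mem {T : Set L} (hT : LieSubalgebra.lieSpan R L T = ⊤)
    {S : Submodule R L} (hTS : T ⊆ S) (hS : ∀ t ∈ T, ∀ s ∈ S, ⁅t, s⁆ ∈ S) : S = ⊤ := by
  rw [eq_top_iff]
  rintro a -
  have ha : a ∈ LieSubalgebra.lieSpan R L T := hT ▸ LieSubalgebra.mem_top a
  suffices a ∈ S ∧ ∀ s ∈ S, ⁅a, s⁆ ∈ S from this.1
  induction ha using LieSubalgebra.lieSpan_induction with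
  | mem t ht => exact ⟨hTS ht, hS t ht⟩
  | zero => simp
  | add a b _ _ ha hb =>
    exact ⟨add_mem ha.1 hb.1, fun s hs => by
      simpa only [add_lie] using add_mem (ha.2 s hs) (hb.2 s hs)⟩
  | smul c a _ ha =>
    exact ⟨S.smul_mem c ha.1, fun s hs => by simpa only [smul_lie] using S.smul_mem c (ha.2 s hs)⟩
  | lie a b _ _ ha hb =>
    exact ⟨ha.2 b hb.1, fun s hs => by
      simpa only [lie_lie] using sub_mem (ha.2 _ (hb.2 s hs)) (hb.2 _ (ha.2 s hs))⟩

end LieSpan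

lemma iSupIndep.iSupIndep_biSup {α ι κ : Type*} [CompleteLattice α] [IsModularLattice α]
    [IsCompactlyGenerated α] {f : ι → α} (hf : iSupIndep f) {s : κ → Set ι}
    (hs : Pairwise fun j j' => Disjoint (s j) (s j')) : iSupIndep fun j => ⨆ i ∈ s j, f i := by
  intro j
  have hdisj : Disjoint (s j) (⋃ (j' : κ) (_ : j' ≠ j), s j') := by
    simp only [Set.disjoint_iUnion_right]
    exact fun j' hj' => hs hj'.symm
  refine (hf.disjoint_biSup_biSup hdisj).mono_right (iSup₂_le fun j' hj' => ?_)
  exact biSup_mono fun i hi => Set.mem_biUnion hj' hi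

lemma LieSubalgebra.lie_mem_of_mem_sup_range {R L L' : Type*} [CommRing R] [LieRing L]
    [LieAlgebra R L] [LieRing L'] [LieAlgebra R L'] {K : LieSubalgebra R L} {g : L' →ₗ⁅R⁆ L}
    (hg : ∀ x, ∀ m ∈ K, ⁅g x, m⁆ ∈ K) {s : L}
    (hs : s ∈ K.toSubmodule ⊔ LinearMap.range g.toLinearMap) {m : L} (hm : m ∈ K) : ⁅s, m⁆ ∈ K := by
  obtain ⟨a, ha, _, ⟨x, rfl⟩, rfl⟩ := Submodule.mem_sup.1 hs
  rw [add_lie]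
  exact add_mem (K.lie_mem ha hm) (hg x m hm)

lemma pairwise_disjoint_Iio_singleton_Ioi {α : Type*} [LinearOrder α] (a : α) :
    Pairwise fun i j : Fin 3 =>
      Disjoint (![Set.Iio a, {a}, Set.Ioi a] i) (![Set.Iio a, {a}, Set.Ioi a] j) := by
  intro i j hij
  fin_cases i <;> fin_cases j <;> simp_all [Set.disjoint_left, le_of_lt, ne_of_lt, ne_of_gt]

namespace Contragredient

open LieSemidirectProduct

section

variable {k : Type*} [Field k] {X : Type*} [LieRing X] [LieAlgebra k X]
  {V : Type*} [AddCommGroup V] [Module k V]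
  (δ : X →ₗ⁅k⁆ LieDerivation k (F k V) (F k V)) (d : V ⊗[k] Module.Dual k V →ₗ[k] X)

lemma ιF_eq_add (v : V) (f : Module.Dual k V) : ιF k V (v, f) = ιF k V (v, 0) + ιF k V (0, f) :=
  Subtype.ext <| by
    show TensorAlgebra.ι k (v, f) = TensorAlgebra.ι k (v, 0) + TensorAlgebra.ι k (0, f)
    rw [← map_add, Prod.mk_add_mk, add_zero, zero_add]

lemma lieSpan_range_ιF : LieSubalgebra.lieSpan k (F k V) (Set.range (ιF k V)) = ⊤ := by
  rw [← LieSubalgebra.comap_lieSpan_range_eq (f := ιF k V), eq_top_iff]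
  exact fun t _ => t.2

lemma lieSpan_generators_eq_top :
    LieSubalgebra.lieSpan k (gt k δ d)
      (Set.range (gtV k δ d) ∪ Set.range (gtD k δ d) ∪ Set.range (ι₀ k δ d)) = ⊤ := by
  set T := LieSubalgebra.lieSpan k (gt k δ d)
    (Set.range (gtV k δ d) ∪ Set.range (gtD k δ d) ∪ Set.range (ι₀ k δ d))
  have hF : ∀ t : F k V, π k δ d (inl δ t) ∈ T := by
    suffices ⊤ ≤ T.comap ((π k δ d).comp (inl δ)) from fun t => this trivial
    rw [← lieSpan_range_ιF, LieSubalgebra.lieSpan_le]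
    rintro _ ⟨⟨v, f⟩, rfl⟩
    rw [SetLike.mem_coe, LieSubalgebra.mem_comap, ιF_eq_add, map_add]
    exact add_mem (LieSubalgebra.subset_lieSpan (.inl (.inl ⟨v, rfl⟩)))
      (LieSubalgebra.subset_lieSpan (.inl (.inr ⟨f, rfl⟩)))
  refine eq_top_iff.2 fun a _ => ?_
  obtain ⟨⟨t, x⟩, rfl⟩ := Submodule.Quotient.mk_surjective (I0 k δ d).toSubmodule a
  have hsplit : (t, x) = inl δ t + inr δ x := Prod.ext (add_zero t).symm (zero_add x).symm
  change π k δ d (t, x) ∈ T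
  rw [hsplit, map_add]
  exact add_mem (hF t) (LieSubalgebra.subset_lieSpan (.inr ⟨x, rfl⟩))

lemma lie_gtV_gtD (v : V) (f : Module.Dual k V) :
    ⁅gtV k δ d v, gtD k δ d f⁆ = ι₀ k δ d (d (v ⊗ₜ[k] f)) := by
  have hrel : π k δ d (mk δ ⁅ιF k V (v, 0), ιF k V (0, f)⁆ (-(d (v ⊗ₜ[k] f)))) = 0 :=
    (Submodule.Quotient.mk_eq_zero _).2 (LieSubmodule.subset_lieSpan ⟨v, f, rfl⟩)
  have hsplit : (mk δ ⁅ιF k V (v, 0), ιF k V (0, f)⁆ (-(d (v ⊗ₜ[k] f))) : SD k δ)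
      = ⁅inl δ (ιF k V (v, 0)), inl δ (ιF k V (0, f))⁆ - inr δ (d (v ⊗ₜ[k] f)) := by
    rw [← LieHom.map_lie]
    exact Prod.ext (sub_zero _).symm (zero_sub _).symm
  rw [hsplit, map_sub, sub_eq_zero, LieHom.map_lie] at hrel
  exact hrel

section

variable {δ}
variable {φ : X →ₗ⁅k⁆ Module.End k V}
    (hδ : ∀ (x : X) (v : V) (f : Module.Dual k V),
      ((δ x (ιF k V (v, f)) : F k V) : TensorAlgebra k (V × Module.Dual k V))
        = TensorAlgebra.ι k (φ x v, dualAct k V φ x f))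
include hδ

lemma lie_ι₀_gtV (x : X) (v : V) : ⁅ι₀ k δ d x, gtV k δ d v⁆ = gtV k δ d (φ x v) := by
  have h : δ x (ιF k V (v, 0)) = ιF k V (φ x v, 0) := by
    apply Subtype.ext
    rw [hδ x v 0]
    simp [dualAct, ιF]
  show π k δ d ⁅inr δ x, inl δ (ιF k V (v, 0))⁆ = _
  rw [lie_inr_inl, h]
  rfl

lemma lie_ι₀_gtD (x : X) (f : Module.Dual k V) :
    ⁅ι₀ k δ d x, gtD k δ d f⁆ = gtD k δ d (dualAct k V φ x f) := by
  have h : δ x (ιF k V (0, f)) = ιF k V (0, dualAct k V φ x f) := by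
    apply Subtype.ext
    rw [hδ x 0 f, map_zero]
    rfl
  show π k δ d ⁅inr δ x, inl δ (ιF k V (0, f))⁆ = _
  rw [lie_inr_inl, h]
  rfl

lemma lie_ι₀_mem_nMinus (x : X) {m : gt k δ d} (hm : m ∈ nMinus k δ d) :
    ⁅ι₀ k δ d x, m⁆ ∈ nMinus k δ d := by
  refine LieSubalgebra.lie_mem_of_mem_lieSpan (S := (nMinus k δ d).toSubmodule) le_rfl
    (fun _ hs _ hm => LieSubalgebra.lie_mem _ hs hm) ?_ hm
  rintro _ ⟨f, rfl⟩
  rw [lie_ι₀_gtD d hδ]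
  exact LieSubalgebra.subset_lieSpan ⟨_, rfl⟩

lemma lie_ι₀_mem_nPlus (x : X) {p : gt k δ d} (hp : p ∈ nPlus k δ d) :
    ⁅ι₀ k δ d x, p⁆ ∈ nPlus k δ d := by
  refine LieSubalgebra.lie_mem_of_mem_lieSpan (S := (nPlus k δ d).toSubmodule) le_rfl
    (fun _ hs _ hp => LieSubalgebra.lie_mem _ hs hp) ?_ hp
  rintro _ ⟨v, rfl⟩
  rw [lie_ι₀_gtV d hδ]
  exact LieSubalgebra.subset_lieSpan ⟨_, rfl⟩

lemma lie_gtV_mem_nMinus_sup_range_ι₀ (v : V) {m : gt k δ d} (hm : m ∈ nMinus k δ d) :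
    ⁅gtV k δ d v, m⁆ ∈ (nMinus k δ d).toSubmodule ⊔ LinearMap.range (ι₀ k δ d).toLinearMap := by
  refine LieSubalgebra.lie_mem_of_mem_lieSpan le_sup_left
    (fun _ hs _ hm => LieSubalgebra.lie_mem_of_mem_sup_range (lie_ι₀_mem_nMinus d hδ) hs hm) ?_ hm
  rintro _ ⟨f, rfl⟩
  rw [lie_gtV_gtD]
  exact Submodule.mem_sup_right ⟨_, rfl⟩

lemma lie_gtD_mem_nPlus_sup_range_ι₀ (f : Module.Dual k V) {p : gt k δ d} (hp : p ∈ nPlus k δ d) :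
    ⁅gtD k δ d f, p⁆ ∈ (nPlus k δ d).toSubmodule ⊔ LinearMap.range (ι₀ k δ d).toLinearMap := by
  refine LieSubalgebra.lie_mem_of_mem_lieSpan le_sup_left
    (fun _ hs _ hp => LieSubalgebra.lie_mem_of_mem_sup_range (lie_ι₀_mem_nPlus d hδ) hs hp) ?_ hp
  rintro _ ⟨v, rfl⟩
  rw [← lie_skew, lie_gtV_gtD]
  exact neg_mem (Submodule.mem_sup_right ⟨_, rfl⟩)

lemma nMinus_sup_range_ι₀_sup_nPlus :
    (nMinus k δ d).toSubmodule ⊔ LinearMap.range (ι₀ k δ d).toLinearMap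
      ⊔ (nPlus k δ d).toSubmodule = ⊤ := by
  set S := (nMinus k δ d).toSubmodule ⊔ LinearMap.range (ι₀ k δ d).toLinearMap
    ⊔ (nPlus k δ d).toSubmodule
  have mem_of_nMinus {m} (hm : m ∈ nMinus k δ d) : m ∈ S :=
    Submodule.mem_sup_left (Submodule.mem_sup_left hm)
  have mem_of_ι₀ (x : X) : ι₀ k δ d x ∈ S :=
    Submodule.mem_sup_left (Submodule.mem_sup_right ⟨x, rfl⟩)
  have mem_of_nPlus {p} (hp : p ∈ nPlus k δ d) : p ∈ S := Submodule.mem_sup_right hp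
  have hV : ∀ v, gtV k δ d v ∈ nPlus k δ d := fun v => LieSubalgebra.subset_lieSpan ⟨v, rfl⟩
  have hD : ∀ f, gtD k δ d f ∈ nMinus k δ d := fun f => LieSubalgebra.subset_lieSpan ⟨f, rfl⟩
  refine Submodule.eq_top_of_lie_mem (lieSpan_generators_eq_top δ d) ?_ ?_
  · rintro _ ((⟨v, rfl⟩ | ⟨f, rfl⟩) | ⟨x, rfl⟩)
    exacts [mem_of_nPlus (hV v), mem_of_nMinus (hD f), mem_of_ι₀ x]
  rintro _ ((⟨v, rfl⟩ | ⟨f, rfl⟩) | ⟨x, rfl⟩) _ hs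
    <;> obtain ⟨_, hmx, p, hp, rfl⟩ := Submodule.mem_sup.1 hs
    <;> obtain ⟨m, hm, _, ⟨x', rfl⟩, rfl⟩ := Submodule.mem_sup.1 hmx
    <;> simp only [lie_add, LieHom.coe_toLinearMap]
    <;> refine add_mem (add_mem ?_ ?_) ?_
  · exact Submodule.mem_sup_left (lie_gtV_mem_nMinus_sup_range_ι₀ d hδ v hm)
  · rw [← lie_skew, lie_ι₀_gtV d hδ]
    exact neg_mem (mem_of_nPlus (hV _))
  · exact mem_of_nPlus (LieSubalgebra.lie_mem _ (hV v) hp)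
  · exact mem_of_nMinus (LieSubalgebra.lie_mem _ (hD f) hm)
  · rw [← lie_skew, lie_ι₀_gtD d hδ]
    exact neg_mem (mem_of_nMinus (hD _))
  · have hle : (nPlus k δ d).toSubmodule ⊔ LinearMap.range (ι₀ k δ d).toLinearMap ≤ S :=
      sup_le le_sup_right (le_sup_right.trans le_sup_left)
    exact hle (lie_gtD_mem_nPlus_sup_range_ι₀ d hδ f hp)
  · exact mem_of_nMinus (lie_ι₀_mem_nMinus d hδ x hm)
  · rw [← LieHom.map_lie]
    exact mem_of_ι₀ _
  · exact mem_of_nPlus (lie_ι₀_mem_nPlus d hδ x hp)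

end

end

theorem triangular_decomposition_general
    {k : Type*} [Field k]
    {X : Type*} [LieRing X] [LieAlgebra k X]
    {V : Type*} [AddCommGroup V] [Module k V]
    (φ : X →ₗ⁅k⁆ Module.End k V)
    (δ : X →ₗ⁅k⁆ LieDerivation k (F k V) (F k V))
    (hδ : ∀ (x : X) (v : V) (f : Module.Dual k V),
      ((δ x (ιF k V (v, f)) : F k V) : TensorAlgebra k (V × Module.Dual k V))
        = TensorAlgebra.ι k (φ x v, dualAct k V φ x f))
    (d : V ⊗[k] Module.Dual k V →ₗ[k] X)
    (G : ℤ → Submodule k (gt k δ d))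
    (hG : DirectSum.IsInternal G)
    (hGb : ∀ (m n : ℤ), ∀ a ∈ G m, ∀ b ∈ G n, ⁅a, b⁆ ∈ G (m + n))
    (hGV : ∀ v : V, gtV k δ d v ∈ G 1)
    (hGX : ∀ x : X, ι₀ k δ d x ∈ G 0)
    (hGD : ∀ f : Module.Dual k V, gtD k δ d f ∈ G (-1)) :
    DirectSum.IsInternal
      (fun j : Fin 3 =>
        ![(nMinus k δ d).toSubmodule,
          LinearMap.range (ι₀ k δ d).toLinearMap,
          (nPlus k δ d).toSubmodule] j) ∧
    (nMinus k δ d).toSubmodule = (⨆ n : ℤ, ⨆ _ : n < 0, G n) ∧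
    LinearMap.range (ι₀ k δ d).toLinearMap = G 0 ∧
    (nPlus k δ d).toSubmodule = (⨆ n : ℤ, ⨆ _ : 0 < n, G n) := by
  have hindep : iSupIndep fun j => ⨆ n ∈ ![Set.Iio 0, {0}, Set.Ioi 0] j, G n :=
    hG.submodule_iSupIndep.iSupIndep_biSup (pairwise_disjoint_Iio_singleton_Ioi 0)
  have htop : ⨆ j, ![(nMinus k δ d).toSubmodule, LinearMap.range (ι₀ k δ d).toLinearMap,
      (nPlus k δ d).toSubmodule] j = ⊤ := by
    rw [iSup_fin_three]
    exact nMinus_sup_range_ι₀_sup_nPlus d hδ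
  have hN : (nMinus k δ d).toSubmodule ≤ ⨆ n ∈ Set.Iio 0, G n :=
    lieSpan_le_biSup_of_add_mem hGb (s := Set.Iio 0)
      (fun _ hi _ hj => Set.mem_Iio.2 (add_neg hi hj)) (i := -1) (by norm_num)
      (by rintro _ ⟨f, rfl⟩; exact hGD f)
  have hX : LinearMap.range (ι₀ k δ d).toLinearMap ≤ ⨆ n ∈ ({0} : Set ℤ), G n := by
    intro y hy
    obtain ⟨x, rfl⟩ := LinearMap.mem_range.1 hy
    exact le_biSup G (Set.mem_singleton (0 : ℤ)) (hGX x)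
  have hP : (nPlus k δ d).toSubmodule ≤ ⨆ n ∈ Set.Ioi 0, G n :=
    lieSpan_le_biSup_of_add_mem hGb (s := Set.Ioi 0)
      (fun _ hi _ hj => Set.mem_Ioi.2 (add_pos hi hj)) (i := 1) (by norm_num)
      (by rintro _ ⟨v, rfl⟩; exact hGV v)
  have hle : ![(nMinus k δ d).toSubmodule, LinearMap.range (ι₀ k δ d).toLinearMap,
      (nPlus k δ d).toSubmodule] ≤ fun j => ⨆ n ∈ ![Set.Iio 0, {0}, Set.Ioi 0] j, G n := by
    intro j
    fin_cases j
    exacts [hN, hX, hP]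
  have heq := (hindep.le_iff_eq_of_iSup_eq_top htop).1 hle
  refine ⟨?_, congrFun heq 0, (congrFun heq 1).trans iSup_iSup_eq_left, congrFun heq 2⟩
  rw [DirectSum.isInternal_submodule_iff_iSupIndep_and_iSup_eq_top]
  exact ⟨heq ▸ hindep, htop⟩

/-- Triangular decomposition of the auxiliary contragredient Lie algebra: if `𝔛` has enough
modules, then `g̃ = n₋ ⊕ ι₀(𝔛) ⊕ n₊` as `k`-vector spaces; moreover, with respect to the
ℤ-grading of `g̃` (with `V*` in degree `-1`, `𝔛` in degree `0` and `V` in degree `1`), one has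
`n₋ = ⊕_{n<0} g̃ₙ`, `ι₀(𝔛) = g̃₀` and `n₊ = ⊕_{n>0} g̃ₙ`. -/
theorem triangular_decomposition
    {k : Type*} [Field k]
    {X : Type*} [LieRing X] [LieAlgebra k X] [FiniteDimensional k X]
    {V : Type*} [AddCommGroup V] [Module k V] [FiniteDimensional k V]
    (φ : X →ₗ⁅k⁆ Module.End k V)
    (δ : X →ₗ⁅k⁆ LieDerivation k (F k V) (F k V))
    (hδ : ∀ (x : X) (v : V) (f : Module.Dual k V),
      ((δ x (ιF k V (v, f)) : F k V) : TensorAlgebra k (V × Module.Dual k V))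
        = TensorAlgebra.ι k (φ x v, dualAct k V φ x f))
    (d : V ⊗[k] Module.Dual k V →ₗ[k] X)
    (hd : ∀ (x : X) (v : V) (f : Module.Dual k V),
      ⁅x, d (v ⊗ₜ[k] f)⁆ = d (φ x v ⊗ₜ[k] f) + d (v ⊗ₜ[k] dualAct k V φ x f))
    (henough : HasEnoughModules.{w} k X)
    (G : ℤ → Submodule k (gt k δ d))
    (hG : DirectSum.IsInternal G)
    (hGb : ∀ (m n : ℤ), ∀ a ∈ G m, ∀ b ∈ G n, ⁅a, b⁆ ∈ G (m + n))
    (hGV : ∀ v : V, gtV k δ d v ∈ G 1)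
    (hGX : ∀ x : X, ι₀ k δ d x ∈ G 0)
    (hGD : ∀ f : Module.Dual k V, gtD k δ d f ∈ G (-1)) :
    DirectSum.IsInternal
      (fun j : Fin 3 =>
        ![(nMinus k δ d).toSubmodule,
          LinearMap.range (ι₀ k δ d).toLinearMap,
          (nPlus k δ d).toSubmodule] j) ∧
    (nMinus k δ d).toSubmodule = (⨆ n : ℤ, ⨆ _ : n < 0, G n) ∧
    LinearMap.range (ι₀ k δ d).toLinearMap = G 0 ∧
    (nPlus k δ d).toSubmodule = (⨆ n : ℤ, ⨆ _ : 0 < n, G n) :=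
  triangular_decomposition_general φ δ hδ d G hG hGb hGV hGX hGD

end Contragredient
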